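/- Let n be a positive integer and k an integer with 1 ≤ k < 2^n, and set q = k/2^n. For the logistic map sequence defined by x_{j+1} = 3.71·x_j·(1 − x_j) with initial value x_0 = q² = k²/4^n, there exists an integer m with 0 ≤ m ≤ 2n such that x_m > 1/2. -/

import Mathlib

/-!
While `x ≤ 1 - 2/a` the factor `a (1 - x)` is at least `2`, so the orbit at least doubles;
once `1 - 2/a < x ≤ 1/2`, monotonicity of `x (1 - x)` on `[0, 1/2]` gives
`a x (1 - x) > a (1 - 2/a) (2/a) = 2 - 4/a`, which exceeds `1/2` as soon as `a > 8/3`.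
Hence an orbit staying in `[0, 1/2]` for `N` steps satisfies `x_N ≥ 2^N x_0`, and starting from
`x_0 = k²/4^n` this forces `x_{2n} ≥ k² ≥ 1` unless the orbit has already exceeded `1/2`.
-/

namespace Logistic

theorem half_lt_or_two_mul_le {a y : ℝ} (ha : 8 / 3 < a) (hy0 : 0 ≤ y) (hy : y ≤ 1 / 2) :
    1 / 2 < a * y * (1 - y) ∨ 2 * y ≤ a * y * (1 - y) := by
  rcases le_or_gt (a * y) (a - 2) with hsmall | hlarge
  · right
    nlinarith
  · left
    nlinarith

variable {a : ℝ} {x : ℕ → ℝ}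

theorem two_pow_mul_le_of_forall_le_half (ha : 8 / 3 < a)
    (hrec : ∀ j, x (j + 1) = a * x j * (1 - x j)) (hx0 : 0 ≤ x 0) :
    ∀ N, (∀ m ≤ N, x m ≤ 1 / 2) → 2 ^ N * x 0 ≤ x N
  | 0, _ => by simp
  | N + 1, hle => by
    have hN : 2 ^ N * x 0 ≤ x N :=
      two_pow_mul_le_of_forall_le_half ha hrec hx0 N fun m hm => hle m (by omega)
    have hxN : 0 ≤ x N := le_trans (by positivity) hN
    have hnext := hle (N + 1) le_rfl
    rw [hrec] at hnext ⊢
    rcases half_lt_or_two_mul_le ha hxN (hle N (by omega)) with hgt | hdouble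
    · linarith
    · rw [pow_succ]
      linarith

theorem exists_le_half_lt (ha : 8 / 3 < a) (hrec : ∀ j, x (j + 1) = a * x j * (1 - x j))
    (hx0 : 0 ≤ x 0) {N : ℕ} (hN : 1 / 2 < 2 ^ N * x 0) : ∃ m ≤ N, 1 / 2 < x m := by
  by_contra! hle
  have hgrowth := two_pow_mul_le_of_forall_le_half ha hrec hx0 N hle
  linarith [hle N le_rfl]

end Logistic

theorem logistic_map_amplification_general_general (n : ℕ) (k : ℕ)
    (hk1 : 1 ≤ k) (x : ℕ → ℝ)
    (h0 : x 0 = (k : ℝ) ^ 2 / 4 ^ n)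
    (hrec : ∀ j, x (j + 1) = 3.71 * x j * (1 - x j)) :
    ∃ m : ℕ, m ≤ 2 * n ∧ x m > 1 / 2 := by
  have hk : (1 : ℝ) ≤ k := by exact_mod_cast hk1
  have hx0 : 0 ≤ x 0 := by rw [h0]; positivity
  have hgrowth : (2 : ℝ) ^ (2 * n) * x 0 = (k : ℝ) ^ 2 := by
    rw [h0, pow_mul]
    field_simp
    norm_num
  exact Logistic.exists_le_half_lt (by norm_num) hrec hx0 (by nlinarith)

/-- For `q = k/2^n` with `1 ≤ k < 2^n`, the logistic map sequence
`x_{j+1} = 3.71 * x_j * (1 - x_j)` with initial value `x_0 = q² = k²/4^n` reaches a value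
greater than `1/2` within `2n` steps. -/
theorem logistic_map_amplification_general (n : ℕ) (hn : 0 < n) (k : ℕ)
    (hk1 : 1 ≤ k) (hk2 : k < 2 ^ n) (x : ℕ → ℝ)
    (h0 : x 0 = (k : ℝ) ^ 2 / 4 ^ n)
    (hrec : ∀ j, x (j + 1) = 3.71 * x j * (1 - x j)) :
    ∃ m : ℕ, m ≤ 2 * n ∧ x m > 1 / 2 :=
  logistic_map_amplification_general_general n k hk1 x h0 hrec
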